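/- Let K be a convex body in ℝ^m. A pair (p,q) ∈ ∂K × ∂K is an antipodal pair if there exists a unit vector u and parallel supporting hyperplanes H_u, H_{-u} of K orthogonal to u with p ∈ H_u ∩ ∂K and q ∈ H_{-u} ∩ ∂K. A pair (p,q) ∈ ∂K × ∂K is a diametric pair if ‖q - p‖ = max{‖x - y‖ : x, y ∈ K, x - y parallel to q - p}. Then the set of antipodal pairs of K equals the set of diametric pairs of K. -/

import Mathlib

variable {m : ℕ}

/-- `(p, q)` is an antipodal pair of the convex body `K`: `p` and `q` lie on the boundary
of `K` and on the two parallel supporting hyperplanes of `K` orthogonal to some unit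
direction `u` (`p` on the one with outer normal `u`, `q` on the one with outer normal `-u`). -/
def IsAntipodalPair (K : Set (EuclideanSpace ℝ (Fin m)))
    (p q : EuclideanSpace ℝ (Fin m)) : Prop :=
  p ∈ frontier K ∧ q ∈ frontier K ∧
    ∃ u : EuclideanSpace ℝ (Fin m), ‖u‖ = 1 ∧
      (∀ x ∈ K, inner ℝ x u ≤ (inner ℝ p u : ℝ)) ∧
      (∀ x ∈ K, (inner ℝ q u : ℝ) ≤ inner ℝ x u)

/-- `(p, q)` is a diametric pair of the convex body `K`: `p` and `q` lie on the boundary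
of `K` and the chord `pq` has maximal length among all chords of `K` parallel to it,
the common direction being some unit vector `u`. -/
def IsDiametricPair (K : Set (EuclideanSpace ℝ (Fin m)))
    (p q : EuclideanSpace ℝ (Fin m)) : Prop :=
  p ∈ frontier K ∧ q ∈ frontier K ∧
    ∃ u : EuclideanSpace ℝ (Fin m), ‖u‖ = 1 ∧
      (∃ α : ℝ, q - p = α • u) ∧
      ∀ x ∈ K, ∀ y ∈ K, (∃ β : ℝ, x - y = β • u) → ‖x - y‖ ≤ ‖q - p‖

/-! If `p` and `q` lie on parallel supporting hyperplanes with normal `u`, every chord of `K`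
parallel to `q - p` has `u`-extent at most the width `⟪p - q, u⟫ > 0`, which is the `u`-extent
of `q - p` itself. Conversely, if `q - p` is a longest chord in its direction, then `interior K`
misses the translate `K + (q - p)`. A hyperplane separating them supports both `K` and
`K + (q - p)` at `q`; translated by `p - q`, it supports `K` at `p`. -/

open Filter Topology
open scoped RealInnerProductSpace

section TopologicalVectorSpace

variable {E : Type*} [AddCommGroup E] [Module ℝ E] [TopologicalSpace E]
  [IsTopologicalAddGroup E] [ContinuousSMul ℝ E]

theorem exists_pos_add_smul_mem_of_mem_interior {K : Set E} {z : E} (hz : z ∈ interior K)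
    (v : E) : ∃ δ > (0 : ℝ), z + δ • v ∈ K := by
  have hcont : Tendsto (fun δ : ℝ => z + δ • v) (𝓝 0) (𝓝 z) :=
    (by fun_prop : Continuous fun δ : ℝ => z + δ • v).tendsto' 0 z (by simp)
  obtain ⟨δ, hδK, hδ⟩ := ((hcont.eventually (mem_interior_iff_mem_nhds.1 hz)).filter_mono
    nhdsWithin_le_nhds |>.and self_mem_nhdsWithin).exists (f := 𝓝[>] (0 : ℝ))
  exact ⟨δ, hδ, hδK⟩

theorem Convex.exists_isMinOn_isMaxOn_of_disjoint_interior [LocallyConvexSpace ℝ E]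
    {K : Set E} (hK : Convex ℝ K) (hKint : (interior K).Nonempty) {p q : E} (hp : p ∈ K)
    (hq : q ∈ K) (hdisj : Disjoint (interior K) ((q - p + ·) '' K)) :
    ∃ f : StrongDual ℝ E, f p < f q ∧ IsMinOn f K p ∧ IsMaxOn f K q := by
  obtain ⟨f, c, hlt, hge⟩ := geometric_hahn_banach_open hK.interior isOpen_interior
    (hK.translate (q - p)) hdisj
  have hle : ∀ x ∈ K, f x ≤ c := by
    have hcl : closure (interior K) ⊆ {x | f x ≤ c} :=
      closure_minimal (fun x hx => (hlt x hx).le) (isClosed_le f.continuous continuous_const)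
    rw [hK.closure_interior_eq_closure_of_nonempty_interior hKint] at hcl
    exact fun x hx => hcl (subset_closure hx)
  have hge' : ∀ x ∈ K, c ≤ f q - f p + f x := fun x hx => by
    simpa using hge _ ⟨x, hx, rfl⟩
  have hfq : f q = c := le_antisymm (hle q hq) (by simpa using hge' p hp)
  obtain ⟨z, hz⟩ := hKint
  refine ⟨f, ?_, isMinOn_iff.2 fun x hx => ?_, isMaxOn_iff.2 fun x hx => hfq ▸ hle x hx⟩
  · linarith [hlt z hz, hge' z (interior_subset hz)]
  · linarith [hge' x hx]

end TopologicalVectorSpace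

theorem norm_sub_le_of_isMaxOn_of_isMinOn {E : Type*} [SeminormedAddCommGroup E]
    [NormedSpace ℝ E] (f : E →ₗ[ℝ] ℝ) {K : Set E} {p q x y : E} {t : ℝ}
    (hp : IsMaxOn f K p) (hq : IsMinOn f K q) (hpq : f q < f p) (hx : x ∈ K) (hy : y ∈ K)
    (hxy : x - y = t • (q - p)) : ‖x - y‖ ≤ ‖q - p‖ := by
  have hfxy : f x - f y = t * (f q - f p) := by
    rw [← map_sub, hxy, map_smul, map_sub, smul_eq_mul]
  have hwidth : |t| * (f p - f q) ≤ 1 * (f p - f q) := by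
    have := isMaxOn_iff.1 hp x hx; have := isMaxOn_iff.1 hp y hy
    have := isMinOn_iff.1 hq x hx; have := isMinOn_iff.1 hq y hy
    calc |t| * (f p - f q) = |f x - f y| := by
          rw [hfxy, abs_mul, abs_sub_comm (f q), abs_of_pos (sub_pos.2 hpq)]
      _ ≤ 1 * (f p - f q) := by rw [one_mul, abs_le]; constructor <;> linarith
  calc ‖x - y‖ = |t| * ‖q - p‖ := by rw [hxy, norm_smul, Real.norm_eq_abs]
    _ ≤ ‖q - p‖ := mul_le_of_le_one_left (norm_nonneg _)
      (le_of_mul_le_mul_right hwidth (sub_pos.2 hpq))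

theorem disjoint_interior_image_add_of_norm_sub_le {E : Type*} [NormedAddCommGroup E]
    [NormedSpace ℝ E] {K : Set E} {d : E} (hd : d ≠ 0)
    (hmax : ∀ x ∈ K, ∀ y ∈ K, (∃ t : ℝ, x - y = t • d) → ‖x - y‖ ≤ ‖d‖) :
    Disjoint (interior K) ((d + ·) '' K) := by
  rintro S hSint hSadd w hw
  obtain ⟨y, hy, rfl⟩ := hSadd hw
  obtain ⟨δ, hδ, hδK⟩ := exists_pos_add_smul_mem_of_mem_interior (hSint hw) d
  have hchord : d + y + δ • d - y = (1 + δ) • d := by module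
  have hlong := hmax _ hδK y hy ⟨1 + δ, hchord⟩
  rw [hchord, norm_smul, Real.norm_eq_abs, abs_of_pos (by linarith)] at hlong
  nlinarith [norm_pos_iff.2 hd]

theorem exists_norm_eq_one_inner_eq_mul {E : Type*} [NormedAddCommGroup E]
    [InnerProductSpace ℝ E] [CompleteSpace E] {f : StrongDual ℝ E} (hf : f ≠ 0) :
    ∃ u : E, ‖u‖ = 1 ∧ ∃ c > (0 : ℝ), ∀ x, ⟪x, u⟫ = c * f x := by
  set v := (InnerProductSpace.toDual ℝ E).symm f
  have hv : v ≠ 0 := by simpa [v] using hf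
  refine ⟨‖v‖⁻¹ • v, norm_smul_inv_norm hv, ‖v‖⁻¹, by positivity, fun x => ?_⟩
  rw [real_inner_smul_right, real_inner_comm, InnerProductSpace.toDual_symm_apply]

variable {K : Set (EuclideanSpace ℝ (Fin m))} {p q : EuclideanSpace ℝ (Fin m)}

theorem IsAntipodalPair.isDiametricPair (hKint : (interior K).Nonempty)
    (h : IsAntipodalPair K p q) : IsDiametricPair K p q := by
  obtain ⟨hp, hq, u, hu, hpu, hqu⟩ := h
  let f := innerₗ (EuclideanSpace ℝ (Fin m)) u
  have hf : ∀ x, f x = ⟪x, u⟫ := fun x => real_inner_comm x u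
  have hfp : IsMaxOn f K p := isMaxOn_iff.2 fun x hx => by simpa only [hf] using hpu x hx
  have hfq : IsMinOn f K q := isMinOn_iff.2 fun x hx => by simpa only [hf] using hqu x hx
  have hlt : f q < f p := by
    obtain ⟨z, hz⟩ := hKint
    obtain ⟨δ, hδ, hδK⟩ := exists_pos_add_smul_mem_of_mem_interior hz u
    have hshift : f (z + δ • u) = f z + δ := by
      rw [map_add, map_smul, hf u, real_inner_self_eq_norm_sq, hu, smul_eq_mul]; ring
    linarith [isMinOn_iff.1 hfq z (interior_subset hz), isMaxOn_iff.1 hfp _ hδK]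
  have hpq : q - p ≠ 0 := sub_ne_zero.2 fun h => hlt.ne (h ▸ rfl)
  refine ⟨hp, hq, ‖q - p‖⁻¹ • (q - p), norm_smul_inv_norm hpq,
    ⟨‖q - p‖, (smul_inv_smul₀ (norm_ne_zero_iff.2 hpq) _).symm⟩, ?_⟩
  rintro x hx y hy ⟨β, hβ⟩
  exact norm_sub_le_of_isMaxOn_of_isMinOn f hfp hfq hlt hx hy (hβ.trans (smul_smul _ _ _))

theorem IsDiametricPair.isAntipodalPair (hKclosed : IsClosed K) (hKconv : Convex ℝ K)
    (hKint : (interior K).Nonempty) (h : IsDiametricPair K p q) : IsAntipodalPair K p q := by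
  obtain ⟨hp, hq, u, hu, ⟨α, hα⟩, hmax⟩ := h
  have hpq : q - p ≠ 0 := by
    intro h0
    obtain ⟨z, hz⟩ := hKint
    obtain ⟨δ, hδ, hδK⟩ := exists_pos_add_smul_mem_of_mem_interior hz u
    have hlong := hmax _ hδK z (interior_subset hz) ⟨δ, add_sub_cancel_left z _⟩
    rw [h0, add_sub_cancel_left, norm_smul, hu, Real.norm_eq_abs, abs_of_pos hδ] at hlong
    simp only [norm_zero, mul_one] at hlong
    linarith
  have hdisj := disjoint_interior_image_add_of_norm_sub_le hpq fun x hx y hy ⟨t, ht⟩ =>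
    hmax x hx y hy ⟨t * α, by rw [ht, hα, smul_smul]⟩
  obtain ⟨f, hlt, hfp, hfq⟩ := hKconv.exists_isMinOn_isMaxOn_of_disjoint_interior hKint
    (hKclosed.frontier_subset hp) (hKclosed.frontier_subset hq) hdisj
  obtain ⟨v, hv, c, hc, hinner⟩ :=
    exists_norm_eq_one_inner_eq_mul (f := -f) (neg_ne_zero.2 fun h0 => by simp [h0] at hlt)
  refine ⟨hp, hq, v, hv, fun x hx => ?_, fun x hx => ?_⟩ <;>
    simp only [hinner, neg_apply] <;> gcongr
  exacts [isMinOn_iff.1 hfp x hx, isMaxOn_iff.1 hfq x hx]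

theorem antipodal_eq_diametric (K : Set (EuclideanSpace ℝ (Fin m)))
    (hKc : IsCompact K) (hKconv : Convex ℝ K) (hKint : (interior K).Nonempty)
    (p q : EuclideanSpace ℝ (Fin m)) :
    IsAntipodalPair K p q ↔ IsDiametricPair K p q :=
  ⟨fun h => h.isDiametricPair hKint, fun h => h.isAntipodalPair hKc.isClosed hKconv hKint⟩
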